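/- arXiv:2604.14669 — 5 statements merged into one kernel-verified Lean document; each statement's English description precedes it below -/
import Mathlib

section
/- Consider gradient descent with momentum on the quadratic model f(x) = (1/2) xᵀ H x, i.e. the iteration m_{t+1} = β m_t + H x_t, x_{t+1} = x_t − η m_{t+1}, with step size η > 0, momentum parameter β ∈ [0,1), initialization m_0 = 0 and arbitrary x_0 ∈ ℝ^d. Then the critical step size sup{ η > 0 : for every x_0 ∈ ℝ^d, sup_{t≥0} ‖x_t‖ < ∞ } equals 2(1+β) / λ_max(H). -/
open Matrix

/-!
Eliminating the momentum gives the heavy-ball recurrence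
`x_{t+2} = (1 + β) x_{t+1} - β x_t - η H x_{t+1}`, so the coordinate of `x_t` along an eigenvector
of `H` with eigenvalue `λ` solves `u_{t+2} = a u_{t+1} - β u_t` with `a = 1 + β - ηλ`.
The roots of `z² - a z + β` have product `β < 1`; if `|a| ≤ 1 + β` both lie in the closed unit
disc and one lies inside it, which keeps `u` bounded. If `a < -(1 + β)` one root is real and
below `-1`, and the initial condition `u_1 = (1 - ηλ) u_0` excites it, so starting at the top
eigenvector the iterates blow up.
-/

/-- The GDM iterates on the quadratic model `f(x) = ½ xᵀHx`:
`gdmIter H η β x₀ t = (x_t, m_t)` where `m_{t+1} = β m_t + H x_t`,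
`x_{t+1} = x_t − η m_{t+1}`, with `x_0 = x₀` and `m_0 = 0`. -/
noncomputable def gdmIter {d : ℕ} (H : Matrix (Fin d) (Fin d) ℝ) (η β : ℝ)
    (x₀ : Fin d → ℝ) : ℕ → (Fin d → ℝ) × (Fin d → ℝ)
  | 0 => (x₀, 0)
  | t + 1 =>
      let p := gdmIter H η β x₀ t
      let m' := β • p.2 + H *ᵥ p.1
      (p.1 - η • m', m')

section Recurrence

variable {R : Type*} [CommRing R] {r s : R} {u : ℕ → R}

theorem sub_mul_eq_pow_mul_of_recurrence
    (hu : ∀ t, u (t + 2) = (r + s) * u (t + 1) - r * s * u t) (t : ℕ) :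
    u (t + 1) - r * u t = s ^ t * (u 1 - r * u 0) := by
  induction t with
  | zero => simp
  | succ t ih => rw [pow_succ']; linear_combination hu t + s * ih

end Recurrence

section NormedRecurrence

variable {𝕜 : Type*} [NormedField 𝕜] {r s : 𝕜} {u : ℕ → 𝕜}

theorem exists_norm_le_of_recurrence (hr : ‖r‖ ≤ 1) (hs : ‖s‖ < 1)
    (hu : ∀ t, u (t + 2) = (r + s) * u (t + 1) - r * s * u t) :
    ∃ C, ∀ t, ‖u t‖ ≤ C := by
  set K := ‖u 1 - r * u 0‖ / (1 - ‖s‖)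
  have hK : ‖u 1 - r * u 0‖ = (1 - ‖s‖) * K := by
    rw [mul_div_cancel₀ _ (sub_pos.2 hs).ne']
  have hstep : ∀ t, ‖u (t + 1)‖ ≤ ‖u t‖ + ‖s‖ ^ t * ‖u 1 - r * u 0‖ := fun t => calc
    ‖u (t + 1)‖ = ‖r * u t + s ^ t * (u 1 - r * u 0)‖ := by
        rw [← sub_mul_eq_pow_mul_of_recurrence hu t, add_sub_cancel]
    _ ≤ ‖r‖ * ‖u t‖ + ‖s‖ ^ t * ‖u 1 - r * u 0‖ := by
        simpa only [norm_mul, norm_pow] using norm_add_le (r * u t) (s ^ t * (u 1 - r * u 0))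
    _ ≤ ‖u t‖ + ‖s‖ ^ t * ‖u 1 - r * u 0‖ := by
        gcongr; exact mul_le_of_le_one_left (norm_nonneg _) hr
  -- `‖u t‖ + ‖s‖ ^ t * K` is a nonincreasing potential
  have hpot : ∀ t, ‖u t‖ + ‖s‖ ^ t * K ≤ ‖u 0‖ + K := by
    intro t
    induction t with
    | zero => simp
    | succ t ih =>
      have hgeom : ‖s‖ ^ t * ‖u 1 - r * u 0‖ + ‖s‖ ^ (t + 1) * K = ‖s‖ ^ t * K := by
        rw [hK]; ring
      linarith [hstep t]
  have hK0 : 0 ≤ K := div_nonneg (norm_nonneg _) (sub_pos.2 hs).le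
  exact ⟨‖u 0‖ + K, fun t => by nlinarith [hpot t, pow_nonneg (norm_nonneg s) t]⟩

theorem eq_mul_of_recurrence_of_norm_le {C : ℝ} (hr : 1 < ‖r‖)
    (hu : ∀ t, u (t + 2) = (r + s) * u (t + 1) - r * s * u t) (hC : ∀ t, ‖u t‖ ≤ C) :
    u 1 = s * u 0 := by
  have hw := sub_mul_eq_pow_mul_of_recurrence (u := u) (r := s) (s := r) fun t => by
    rw [hu t]; ring
  by_contra hne
  have hw0 : 0 < ‖u 1 - s * u 0‖ := norm_pos_iff.2 (sub_ne_zero.2 hne)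
  obtain ⟨t, ht⟩ := ((tendsto_pow_atTop_atTop_of_one_lt hr).eventually_gt_atTop
    ((1 + ‖s‖) * C / ‖u 1 - s * u 0‖)).exists
  have hbound : ‖r‖ ^ t * ‖u 1 - s * u 0‖ ≤ (1 + ‖s‖) * C := calc
    ‖r‖ ^ t * ‖u 1 - s * u 0‖ = ‖u (t + 1) - s * u t‖ := by rw [hw t, norm_mul, norm_pow]
    _ ≤ ‖u (t + 1)‖ + ‖s‖ * ‖u t‖ := by
        simpa only [norm_mul] using norm_sub_le (u (t + 1)) (s * u t)
    _ ≤ (1 + ‖s‖) * C := by nlinarith [hC t, hC (t + 1), norm_nonneg s]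
  rw [div_lt_iff₀ hw0] at ht
  linarith

end NormedRecurrence

section RealRecurrence

variable {a b : ℝ} {u : ℕ → ℝ}

theorem exists_complex_roots_norm_le_one (hb0 : 0 ≤ b) (hb1 : b < 1) (ha : |a| ≤ 1 + b) :
    ∃ r s : ℂ, r + s = a ∧ r * s = b ∧ ‖r‖ ≤ 1 ∧ ‖s‖ < 1 := by
  suffices h : ∃ r s : ℂ, r + s = a ∧ r * s = b ∧ ‖r‖ ≤ 1 ∧ ‖s‖ ≤ 1 by
    obtain ⟨r, s, hsum, hprod, hr, hs⟩ := h
    have hnorm : ‖r‖ * ‖s‖ = b := by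
      rw [← norm_mul, hprod, Complex.norm_real, Real.norm_of_nonneg hb0]
    rcases hs.lt_or_eq with hs | hs
    · exact ⟨r, s, hsum, hprod, hr, hs⟩
    · exact ⟨s, r, by rw [add_comm, hsum], by rw [mul_comm, hprod], hs.le,
        by rw [hs, mul_one] at hnorm; rwa [hnorm]⟩
  have ha' := abs_le.1 ha
  rcases le_or_gt (4 * b) (a ^ 2) with hdisc | hdisc
  · set D := √(a ^ 2 - 4 * b)
    have hD : D ^ 2 = a ^ 2 - 4 * b := Real.sq_sqrt (by linarith)
    have hD0 : 0 ≤ D := Real.sqrt_nonneg _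
    have hDa : D ≤ 2 - |a| :=
      Real.sqrt_le_iff.2 ⟨by linarith, by nlinarith [sq_abs a]⟩
    refine ⟨((a + D) / 2 : ℝ), ((a - D) / 2 : ℝ), by push_cast; ring, ?_, ?_, ?_⟩
    · rw [← Complex.ofReal_mul]; congr 1; linear_combination -hD / 4
    all_goals
      rw [Complex.norm_real, Real.norm_eq_abs, abs_le]
      constructor <;> linarith [le_abs_self a, neg_abs_le a]
  · set E := √(4 * b - a ^ 2)
    have hE : E ^ 2 = 4 * b - a ^ 2 := Real.sq_sqrt (by linarith)
    have hnorm : ∀ y : ℝ, y ^ 2 = E ^ 2 → ‖(⟨a / 2, y / 2⟩ : ℂ)‖ ≤ 1 := fun y hy => by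
      have : ‖(⟨a / 2, y / 2⟩ : ℂ)‖ ^ 2 ≤ 1 := by
        rw [Complex.sq_norm, Complex.normSq_mk]; nlinarith
      nlinarith [norm_nonneg (⟨a / 2, y / 2⟩ : ℂ)]
    refine ⟨⟨a / 2, E / 2⟩, ⟨a / 2, -E / 2⟩, ?_, ?_, hnorm E rfl, hnorm (-E) (by ring)⟩
    · apply Complex.ext <;> simp [neg_div]
    · apply Complex.ext
      · simp; linear_combination hE / 4
      · simp; ring

theorem exists_norm_le_of_real_recurrence (hb0 : 0 ≤ b) (hb1 : b < 1) (ha : |a| ≤ 1 + b)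
    (hu : ∀ t, u (t + 2) = a * u (t + 1) - b * u t) : ∃ C, ∀ t, ‖u t‖ ≤ C := by
  obtain ⟨r, s, hsum, hprod, hr, hs⟩ := exists_complex_roots_norm_le_one hb0 hb1 ha
  obtain ⟨C, hC⟩ := exists_norm_le_of_recurrence hr hs (u := fun t => (u t : ℂ)) fun t => by
    simp only [hsum, hprod, hu t]; push_cast; rfl
  exact ⟨C, fun t => by simpa using hC t⟩

theorem not_exists_norm_le_of_real_recurrence (hb0 : 0 ≤ b) (ha : a < -(1 + b))
    (hu : ∀ t, u (t + 2) = a * u (t + 1) - b * u t) (h0 : u 0 ≠ 0)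
    (h1 : u 1 = (a - b) * u 0) : ¬ ∃ C, ∀ t, ‖u t‖ ≤ C := by
  rintro ⟨C, hC⟩
  set D := √(a ^ 2 - 4 * b)
  have hD : D ^ 2 = a ^ 2 - 4 * b := Real.sq_sqrt (by nlinarith [sq_nonneg (1 - b)])
  have hD0 : 0 ≤ D := Real.sqrt_nonneg _
  have hr : (a - D) / 2 < -1 := by nlinarith
  have hs : (a + D) / 2 ≤ 0 := by nlinarith
  have hu1 := eq_mul_of_recurrence_of_norm_le (r := (a - D) / 2) (s := (a + D) / 2)
    (by rw [Real.norm_eq_abs, abs_of_neg (by linarith)]; linarith)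
    (fun t => by rw [hu t]; linear_combination (-(u t) / 4) * hD) hC
  -- with `r s = b`, `a - b - s = r (1 - s)`, which is nonzero
  have : (a - D) / 2 * (1 - (a + D) / 2) = 0 :=
    (mul_left_inj' h0).1 (by linear_combination hu1 - h1 + u 0 / 4 * hD)
  nlinarith

end RealRecurrence

section Basis

variable {ι 𝕜 E α : Type*} [NontriviallyNormedField 𝕜] [NormedAddCommGroup E]
  [NormedSpace 𝕜 E] (b : Module.Basis ι 𝕜 E) {f : α → E}

theorem Module.Basis.exists_norm_le_of_repr [Fintype ι] (h : ∀ i, ∃ C, ∀ t, ‖b.repr (f t) i‖ ≤ C) :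
    ∃ C, ∀ t, ‖f t‖ ≤ C := by
  choose C hC using h
  refine ⟨∑ i, C i * ‖b i‖, fun t => ?_⟩
  calc ‖f t‖ = ‖∑ i, b.repr (f t) i • b i‖ := by rw [b.sum_repr]
    _ ≤ ∑ i, ‖b.repr (f t) i‖ * ‖b i‖ :=
        (norm_sum_le _ _).trans_eq (Finset.sum_congr rfl fun i _ => _root_.norm_smul _ _)
    _ ≤ ∑ i, C i * ‖b i‖ := by gcongr with i; exact hC i t

theorem Module.Basis.exists_norm_repr_le [CompleteSpace 𝕜] [FiniteDimensional 𝕜 E]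
    (h : ∃ C, ∀ t, ‖f t‖ ≤ C) (i : ι) : ∃ C, ∀ t, ‖b.repr (f t) i‖ ≤ C := by
  obtain ⟨C, hC⟩ := h
  let c := LinearMap.toContinuousLinearMap (b.coord i)
  refine ⟨‖c‖ * C, fun t => ?_⟩
  calc ‖b.repr (f t) i‖ = ‖c (f t)‖ := rfl
    _ ≤ ‖c‖ * ‖f t‖ := c.le_opNorm _
    _ ≤ ‖c‖ * C := by gcongr; exact hC t

end Basis

theorem Module.Basis.repr_apply_eq_mul_of_apply_eq_smul {ι R M : Type*} [CommSemiring R]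
    [AddCommMonoid M] [Module R M] (b : Module.Basis ι R M) {g : M →ₗ[R] M} {μ : ι → R}
    (hg : ∀ j, g (b j) = μ j • b j) (x : M) (i : ι) : b.repr (g x) i = μ i * b.repr x i := by
  have h : (b.coord i).comp g = μ i • b.coord i := b.ext fun j => by
    rcases eq_or_ne j i with rfl | hji <;> simp [*]
  exact LinearMap.congr_fun h x

section GDM

variable {d : ℕ} (H : Matrix (Fin d) (Fin d) ℝ) (η β : ℝ) (x₀ : Fin d → ℝ)

theorem gdmIter_zero_fst : (gdmIter H η β x₀ 0).1 = x₀ := rfl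

theorem gdmIter_one_fst : (gdmIter H η β x₀ 1).1 = x₀ - η • (H *ᵥ x₀) := by
  simp [gdmIter]

theorem gdmIter_add_two_fst (t : ℕ) :
    (gdmIter H η β x₀ (t + 2)).1 = (1 + β) • (gdmIter H η β x₀ (t + 1)).1
      - β • (gdmIter H η β x₀ t).1 - η • (H *ᵥ (gdmIter H η β x₀ (t + 1)).1) := by
  simp only [gdmIter]
  module

variable {H} {b : Module.Basis (Fin d) ℝ (Fin d → ℝ)} {lam : Fin d → ℝ}

theorem gdmIter_repr_one (hb : ∀ j, H *ᵥ b j = lam j • b j) (i : Fin d) :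
    b.repr (gdmIter H η β x₀ 1).1 i = (1 - η * lam i) * b.repr x₀ i := by
  rw [gdmIter_one_fst, map_sub, map_smul, Finsupp.sub_apply, Finsupp.smul_apply, smul_eq_mul,
    ← mulVecLin_apply, b.repr_apply_eq_mul_of_apply_eq_smul (g := H.mulVecLin) hb]
  ring

theorem gdmIter_repr_add_two (hb : ∀ j, H *ᵥ b j = lam j • b j) (i : Fin d) (t : ℕ) :
    b.repr (gdmIter H η β x₀ (t + 2)).1 i
      = (1 + β - η * lam i) * b.repr (gdmIter H η β x₀ (t + 1)).1 i
        - β * b.repr (gdmIter H η β x₀ t).1 i := by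
  rw [gdmIter_add_two_fst]
  simp only [map_sub, map_smul, Finsupp.sub_apply, Finsupp.smul_apply, smul_eq_mul,
    ← mulVecLin_apply, b.repr_apply_eq_mul_of_apply_eq_smul (g := H.mulVecLin) hb]
  ring

theorem gdmIter_exists_norm_le (hb : ∀ j, H *ᵥ b j = lam j • b j) (hβ0 : 0 ≤ β) (hβ1 : β < 1)
    (hη : ∀ i, 0 ≤ η * lam i ∧ η * lam i ≤ 2 * (1 + β)) :
    ∃ C, ∀ t, ‖(gdmIter H η β x₀ t).1‖ ≤ C :=
  b.exists_norm_le_of_repr fun i => exists_norm_le_of_real_recurrence hβ0 hβ1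
    (abs_le.2 ⟨by linarith [hη i], by linarith [hη i]⟩) (gdmIter_repr_add_two η β x₀ hb i)

theorem gdmIter_not_exists_norm_le (hb : ∀ j, H *ᵥ b j = lam j • b j) (hβ0 : 0 ≤ β) {i : Fin d}
    (hη : 2 * (1 + β) < η * lam i) :
    ¬ ∃ C, ∀ t, ‖(gdmIter H η β (b i) t).1‖ ≤ C := fun h =>
  not_exists_norm_le_of_real_recurrence hβ0 (by linarith) (gdmIter_repr_add_two η β (b i) hb i)
    (by simp [gdmIter_zero_fst]) (by rw [gdmIter_repr_one η β (b i) hb, gdmIter_zero_fst]; ring)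
    (b.exists_norm_repr_le h i)

end GDM

/-- **Stability of GDM.**  For gradient descent with momentum `β ∈ [0,1)` on the quadratic
model, the critical step size `sup { η > 0 | ∀ x₀, sup_t ‖x_t‖ < ∞ }` equals
`2(1+β) / λ_max(H)`. -/
theorem gdm_critical_step_size {d : ℕ} (H : Matrix (Fin d) (Fin d) ℝ)
    (hH : H.PosSemidef) (hH0 : H ≠ 0) (β : ℝ) (hβ : β ∈ Set.Ico (0 : ℝ) 1) :
    sSup {η : ℝ | 0 < η ∧ ∀ x₀ : Fin d → ℝ, ∃ C : ℝ, ∀ t : ℕ, ‖(gdmIter H η β x₀ t).1‖ ≤ C}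
      = 2 * (1 + β) / (⨆ i, hH.isHermitian.eigenvalues i) := by
  obtain ⟨hβ0, hβ1⟩ := hβ
  set lam := hH.isHermitian.eigenvalues
  let b := hH.isHermitian.eigenvectorBasis.toBasis.map (WithLp.linearEquiv 2 ℝ (Fin d → ℝ))
  have hb : ∀ j, H *ᵥ b j = lam j • b j := fun j => by
    simpa [b] using hH.isHermitian.mulVec_eigenvectorBasis j
  obtain ⟨i, hi⟩ := Function.ne_iff.1 (hH.isHermitian.eigenvalues_eq_zero_iff.not.2 hH0)
  have : Nonempty (Fin d) := ⟨i⟩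
  obtain ⟨imax, himax⟩ := exists_eq_ciSup_of_finite (f := lam)
  have hle : ∀ j, lam j ≤ lam imax := fun j => himax ▸ le_ciSup (Finite.bddAbove_range lam) j
  have hpos : 0 < lam imax := ((hH.eigenvalues_nonneg i).lt_of_ne' hi).trans_le (hle i)
  have hcrit : ∀ j, 2 * (1 + β) / lam imax * lam j ≤ 2 * (1 + β) := fun j => calc
    2 * (1 + β) / lam imax * lam j ≤ 2 * (1 + β) / lam imax * lam imax := by gcongr; exact hle j
    _ = 2 * (1 + β) := div_mul_cancel₀ _ hpos.ne'
  rw [← himax]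
  refine IsGreatest.csSup_eq ⟨⟨by positivity, fun x₀ => ?_⟩, fun η ⟨_, hbdd⟩ => ?_⟩
  · exact gdmIter_exists_norm_le _ _ x₀ hb hβ0 hβ1 fun j =>
      ⟨mul_nonneg (by positivity) (hH.eigenvalues_nonneg j), hcrit j⟩
  · by_contra! hgt
    exact gdmIter_not_exists_norm_le η β hb hβ0 ((div_lt_iff₀ hpos).1 hgt) (hbdd (b imax))
end

section
/- Let λ_1 ≥ λ_2 ≥ … ≥ λ_d ≥ 0 be real numbers, not all zero. Suppose η > 0 satisfies η λ_1 < 1 and Σ_{i=1}^d η λ_i / (2(1 − η λ_i)) = 1. Then 2 / (Σ_{i=1}^d λ_i + 2 λ_1) ≤ η ≤ 2 / Σ_{i=1}^d λ_i. -/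
/-- **Bounds on the ZO-GD mean-square critical step size.**  Let `λ_1 ≥ … ≥ λ_d ≥ 0`
(not all zero).  If `η > 0` satisfies `η λ_1 < 1` and `Σ_i η λ_i / (2(1 − η λ_i)) = 1`,
then `2 / (Σ_i λ_i + 2 λ_1) ≤ η ≤ 2 / Σ_i λ_i`. -/
theorem zogd_critical_step_size_bounds {d : ℕ} (hd : 0 < d) (lam : Fin d → ℝ)
    (hmono : Antitone lam) (hnonneg : ∀ i, 0 ≤ lam i) (hne : ∃ i, lam i ≠ 0)
    (η : ℝ) (hη : 0 < η)
    (hmax : η * lam ⟨0, hd⟩ < 1)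
    (hsum : ∑ i, η * lam i / (2 * (1 - η * lam i)) = 1) :
    2 / (∑ i, lam i + 2 * lam ⟨0, hd⟩) ≤ η ∧ η ≤ 2 / ∑ i, lam i := by
  set L := lam ⟨0, hd⟩ with hL
  have hLi : ∀ i, lam i ≤ L := fun i => hmono (by simp [Fin.le_def])
  have hxi : ∀ i, η * lam i < 1 := fun i =>
    lt_of_le_of_lt (mul_le_mul_of_nonneg_left (hLi i) hη.le) hmax
  have hden : ∀ i, 0 < 1 - η * lam i := fun i => by linarith [hxi i]
  obtain ⟨j, hj⟩ := hne
  have hS : 0 < ∑ i, lam i :=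
    Finset.sum_pos' (fun i _ => hnonneg i)
      ⟨j, Finset.mem_univ j, lt_of_le_of_ne (hnonneg j) (Ne.symm hj)⟩
  have hnum : ∀ i, 0 ≤ η * lam i := fun i => mul_nonneg hη.le (hnonneg i)
  -- upper bound
  have h1 : ∑ i, η * lam i / 2 ≤ 1 := by
    rw [← hsum]
    refine Finset.sum_le_sum fun i _ => ?_
    gcongr
    · exact hnum i
    · exact mul_pos two_pos (hden i)
    · nlinarith [hnum i]
  have hsum2 : ∑ i, η * lam i / 2 = η * (∑ i, lam i) / 2 := by
    rw [Finset.mul_sum, Finset.sum_div]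
  have hupper : η ≤ 2 / ∑ i, lam i := by
    rw [le_div_iff₀ hS]
    nlinarith [h1, hsum2]
  -- lower bound
  have hdenL : 0 < 1 - η * L := by linarith [hmax]
  have h2' : ∑ i, η * lam i / (2 * (1 - η * lam i)) ≤ ∑ i, η * lam i / (2 * (1 - η * L)) := by
    refine Finset.sum_le_sum fun i _ => ?_
    gcongr
    · exact hnum i
    · exact hLi i
  have h2 : (1 : ℝ) ≤ ∑ i, η * lam i / (2 * (1 - η * L)) := by
    rw [hsum] at h2'; exact h2'
  have hsum3 : ∑ i, η * lam i / (2 * (1 - η * L)) = η * (∑ i, lam i) / (2 * (1 - η * L)) := by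
    rw [Finset.mul_sum, Finset.sum_div]
  have h3 : 2 * (1 - η * L) ≤ η * (∑ i, lam i) := by
    rw [hsum3] at h2
    have := (one_le_div (mul_pos two_pos hdenL)).mp h2
    linarith
  have hpos : 0 < ∑ i, lam i + 2 * L := by
    have := hnonneg ⟨0, hd⟩; rw [← hL] at this; linarith
  have hlower : 2 / (∑ i, lam i + 2 * L) ≤ η := by
    rw [div_le_iff₀ hpos]
    nlinarith [h3]
  exact ⟨hlower, hupper⟩
end

section
/- Let λ_1 ≥ λ_2 ≥ … ≥ λ_d ≥ 0 be real numbers, not all zero, and let β ∈ [0,1). Suppose η > 0 satisfies η λ_1 < 1 − β² and Σ_{i=1}^d η λ_i / (2(1−β)(1 − η λ_i/(1−β²))) = 1. Then 2(1−β) / (Σ_{i=1}^d λ_i + 2λ_1/(1+β)) ≤ η ≤ 2(1−β) / Σ_{i=1}^d λ_i. -/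
/-- **Bounds on the ZO-GDM mean-square critical step size.**  Let `λ_1 ≥ … ≥ λ_d ≥ 0`
(not all zero) and `β ∈ [0,1)`.  If `η > 0` satisfies `η λ_1 < 1 − β²` and
`Σ_i η λ_i / (2(1−β)(1 − η λ_i/(1−β²))) = 1`, then
`2(1−β) / (Σ_i λ_i + 2λ_1/(1+β)) ≤ η ≤ 2(1−β) / Σ_i λ_i`. -/
theorem zogdm_critical_step_size_bounds {d : ℕ} (hd : 0 < d) (lam : Fin d → ℝ)
    (hmono : Antitone lam) (hnonneg : ∀ i, 0 ≤ lam i) (hne : ∃ i, lam i ≠ 0)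
    (β : ℝ) (hβ : β ∈ Set.Ico (0 : ℝ) 1) (η : ℝ) (hη : 0 < η)
    (hmax : η * lam ⟨0, hd⟩ < 1 - β ^ 2)
    (hsum : ∑ i, η * lam i / (2 * (1 - β) * (1 - η * lam i / (1 - β ^ 2))) = 1) :
    2 * (1 - β) / (∑ i, lam i + 2 * lam ⟨0, hd⟩ / (1 + β)) ≤ η ∧
      η ≤ 2 * (1 - β) / ∑ i, lam i := by
  obtain ⟨hβ0, hβ1⟩ := hβ
  have hs : (0:ℝ) < 1 - β ^ 2 := by nlinarith
  have hc : (0:ℝ) < 2 * (1 - β) := by linarith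
  have h1β : (0:ℝ) < 1 + β := by linarith
  have hle : ∀ i, lam i ≤ lam ⟨0, hd⟩ := fun i => hmono (by simp [Fin.le_def])
  have hSpos : 0 < ∑ i, lam i := by
    obtain ⟨j, hj⟩ := hne
    exact Finset.sum_pos' (fun i _ => hnonneg i)
      ⟨j, Finset.mem_univ j, lt_of_le_of_ne (hnonneg j) (Ne.symm hj)⟩
  have hηli : ∀ i, η * lam i < 1 - β ^ 2 := fun i =>
    lt_of_le_of_lt (mul_le_mul_of_nonneg_left (hle i) hη.le) hmax
  have hD : ∀ i, 0 < 1 - η * lam i / (1 - β ^ 2) := by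
    intro i
    have : η * lam i / (1 - β ^ 2) < 1 := (div_lt_one hs).2 (hηli i)
    linarith
  have hDle : ∀ i, 1 - η * lam i / (1 - β ^ 2) ≤ 1 := by
    intro i
    have : 0 ≤ η * lam i / (1 - β ^ 2) :=
      div_nonneg (mul_nonneg hη.le (hnonneg i)) hs.le
    linarith
  -- upper bound
  have hup : (∑ i, η * lam i) / (2 * (1 - β)) ≤ 1 := by
    have h1 : (∑ i, η * lam i) / (2 * (1 - β)) ≤
        ∑ i, η * lam i / (2 * (1 - β) * (1 - η * lam i / (1 - β ^ 2))) := by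
      rw [Finset.sum_div]
      apply Finset.sum_le_sum
      intro i _
      have hDi := hD i
      have hDi1 := hDle i
      have ha : 0 ≤ η * lam i := mul_nonneg hη.le (hnonneg i)
      have hcd : 0 < 2 * (1 - β) * (1 - η * lam i / (1 - β ^ 2)) := mul_pos hc hDi
      rw [div_le_div_iff₀ hc hcd]
      nlinarith [mul_nonneg ha hc.le]
    linarith [h1, hsum.le]
  have hup' : η * ∑ i, lam i ≤ 2 * (1 - β) := by
    have := (div_le_one hc).1 hup
    rwa [← Finset.mul_sum] at this
  -- lower bound
  have hD1 := hD ⟨0, hd⟩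
  have hlow : (1:ℝ) ≤ (∑ i, η * lam i) / (2 * (1 - β) * (1 - η * lam ⟨0, hd⟩ / (1 - β ^ 2))) := by
    have h1 : ∑ i, η * lam i / (2 * (1 - β) * (1 - η * lam i / (1 - β ^ 2))) ≤
        (∑ i, η * lam i) / (2 * (1 - β) * (1 - η * lam ⟨0, hd⟩ / (1 - β ^ 2))) := by
      rw [Finset.sum_div]
      apply Finset.sum_le_sum
      intro i _
      have hDi := hD i
      have ha : 0 ≤ η * lam i := mul_nonneg hη.le (hnonneg i)
      have hd1 : 0 < 2 * (1 - β) * (1 - η * lam ⟨0, hd⟩ / (1 - β ^ 2)) := mul_pos hc hD1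
      have hdi : 0 < 2 * (1 - β) * (1 - η * lam i / (1 - β ^ 2)) := mul_pos hc hDi
      have hDle1 : 1 - η * lam ⟨0, hd⟩ / (1 - β ^ 2) ≤ 1 - η * lam i / (1 - β ^ 2) := by
        have : η * lam i / (1 - β ^ 2) ≤ η * lam ⟨0, hd⟩ / (1 - β ^ 2) :=
          (div_le_div_iff_of_pos_right hs).2 (mul_le_mul_of_nonneg_left (hle i) hη.le)
        linarith
      rw [div_le_div_iff₀ hdi hd1]
      nlinarith [mul_nonneg ha hc.le]
    linarith [h1, hsum.ge]
  have hlow' : 2 * (1 - β) * (1 - η * lam ⟨0, hd⟩ / (1 - β ^ 2)) ≤ η * ∑ i, lam i := by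
    have hd1 : 0 < 2 * (1 - β) * (1 - η * lam ⟨0, hd⟩ / (1 - β ^ 2)) := mul_pos hc hD1
    have := (one_le_div hd1).1 hlow
    rwa [← Finset.mul_sum] at this
  have key : 2 * (1 - β) * (η * lam ⟨0, hd⟩ / (1 - β ^ 2)) = η * (2 * lam ⟨0, hd⟩ / (1 + β)) := by
    have hβne : (1:ℝ) - β ≠ 0 := by linarith
    have hβne' : (1:ℝ) + β ≠ 0 := by linarith
    have hrw : (1:ℝ) - β ^ 2 = (1 - β) * (1 + β) := by ring
    rw [hrw]
    field_simp
  constructor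
  · have hden : 0 < ∑ i, lam i + 2 * lam ⟨0, hd⟩ / (1 + β) := by
      have : 0 ≤ 2 * lam ⟨0, hd⟩ / (1 + β) :=
        div_nonneg (by have := hnonneg ⟨0, hd⟩; linarith) h1β.le
      linarith
    rw [div_le_iff₀ hden]
    nlinarith [hlow', key]
  · rw [le_div_iff₀ hSpos]
    linarith [hup']
end

section
/- Let λ̃_1 ≥ λ̃_2 ≥ … ≥ λ̃_d ≥ 0 be real numbers, not all zero, and let β₁ ∈ [0,1). Suppose η > 0 satisfies η λ̃_1 < 1 + β₁ and Σ_{i=1}^d η λ̃_i / (2(1 − η λ̃_i/(1+β₁))) = 1. Then 2 / (Σ_{i=1}^d λ̃_i + 2λ̃_1/(1+β₁)) ≤ η ≤ 2 / Σ_{i=1}^d λ̃_i. -/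
/-- **Bounds on the Frozen ZO-Adam mean-square critical step size.**  Let
`λ̃_1 ≥ … ≥ λ̃_d ≥ 0` (not all zero) and `β₁ ∈ [0,1)`.  If `η > 0` satisfies
`η λ̃_1 < 1 + β₁` and `Σ_i η λ̃_i / (2(1 − η λ̃_i/(1+β₁))) = 1`, then
`2 / (Σ_i λ̃_i + 2λ̃_1/(1+β₁)) ≤ η ≤ 2 / Σ_i λ̃_i`. -/
theorem zoadam_critical_step_size_bounds {d : ℕ} (hd : 0 < d) (lam : Fin d → ℝ)
    (hmono : Antitone lam) (hnonneg : ∀ i, 0 ≤ lam i) (hne : ∃ i, lam i ≠ 0)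
    (β₁ : ℝ) (hβ₁ : β₁ ∈ Set.Ico (0 : ℝ) 1) (η : ℝ) (hη : 0 < η)
    (hmax : η * lam ⟨0, hd⟩ < 1 + β₁)
    (hsum : ∑ i, η * lam i / (2 * (1 - η * lam i / (1 + β₁))) = 1) :
    2 / (∑ i, lam i + 2 * lam ⟨0, hd⟩ / (1 + β₁)) ≤ η ∧ η ≤ 2 / ∑ i, lam i := by
  have hb : (0:ℝ) < 1 + β₁ := by linarith [hβ₁.1]
  set L0 := lam ⟨0, hd⟩ with hL0
  have hle : ∀ i, lam i ≤ L0 := fun i => hmono (by exact Nat.zero_le _)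
  have hlt : ∀ i, η * lam i < 1 + β₁ := fun i =>
    lt_of_le_of_lt (by nlinarith [hle i]) hmax
  have hden : ∀ i, 0 < 1 - η * lam i / (1 + β₁) := by
    intro i
    have : η * lam i / (1 + β₁) < 1 := (div_lt_one hb).mpr (hlt i)
    linarith
  have hden0 : 0 < 1 - η * L0 / (1 + β₁) := hden _
  obtain ⟨j, hj⟩ := hne
  have hspos : 0 < ∑ i, lam i :=
    Finset.sum_pos' (fun i _ => hnonneg i)
      ⟨j, Finset.mem_univ j, lt_of_le_of_ne (hnonneg j) (Ne.symm hj)⟩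
  constructor
  · -- lower bound
    have hterm : ∀ i : Fin d, η * lam i / (2 * (1 - η * lam i / (1 + β₁)))
        ≤ η * lam i / (2 * (1 - η * L0 / (1 + β₁))) := by
      intro i
      apply div_le_div_of_nonneg_left (mul_nonneg hη.le (hnonneg i)) (by linarith [hden0])
      have hh : η * lam i / (1 + β₁) ≤ η * L0 / (1 + β₁) := by
        exact div_le_div_of_nonneg_right (by nlinarith [hle i] : η * lam i ≤ η * L0) hb.le |>.trans_eq rfl
      linarith
    have h1 : (1:ℝ) ≤ ∑ i, η * lam i / (2 * (1 - η * L0 / (1 + β₁))) := by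
      have := Finset.sum_le_sum (f := fun i => η * lam i / (2 * (1 - η * lam i / (1 + β₁)))) (s := Finset.univ) fun i _ => hterm i
      rw [hsum] at this; exact this
    have h2 : ∑ i, η * lam i / (2 * (1 - η * L0 / (1 + β₁)))
        = η * (∑ i, lam i) / (2 * (1 - η * L0 / (1 + β₁))) := by
      rw [Finset.mul_sum, Finset.sum_div]
    rw [h2, le_div_iff₀ (by linarith)] at h1
    have hEq : η * L0 / (1 + β₁) * (1 + β₁) = η * L0 := by
      field_simp
    have key : 2 ≤ η * (∑ i, lam i + 2 * L0 / (1 + β₁)) := by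
      have : η * L0 / (1 + β₁) * (1 + β₁) = η * L0 := hEq
      have h3 : 2 * (1 - η * L0 / (1 + β₁)) ≤ η * (∑ i, lam i) := by linarith
      have h4 : η * (2 * L0 / (1 + β₁)) = 2 * (η * L0 / (1 + β₁)) := by ring
      nlinarith
    have hdpos : 0 < ∑ i, lam i + 2 * L0 / (1 + β₁) := by
      have : 0 ≤ 2 * L0 / (1 + β₁) := div_nonneg (by nlinarith [hnonneg ⟨0,hd⟩]) hb.le
      linarith
    rw [div_le_iff₀ hdpos]
    linarith
  · -- upper bound
    have hterm : ∀ i : Fin d, η * lam i / 2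
        ≤ η * lam i / (2 * (1 - η * lam i / (1 + β₁))) := by
      intro i
      apply div_le_div_of_nonneg_left (mul_nonneg hη.le (hnonneg i)) (by linarith [hden i])
      have : 0 ≤ η * lam i / (1 + β₁) := div_nonneg (mul_nonneg hη.le (hnonneg i)) hb.le
      linarith
    have h1 : ∑ i, η * lam i / 2 ≤ 1 := by
      have := Finset.sum_le_sum (f := fun i => η * lam i / 2) (s := Finset.univ) fun i _ => hterm i
      rw [hsum] at this; exact this
    have h2 : ∑ i, η * lam i / 2 = η * (∑ i, lam i) / 2 := by
      rw [Finset.mul_sum, Finset.sum_div]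
    rw [h2, div_le_one (by norm_num)] at h1
    rw [le_div_iff₀ hspos]
    linarith
end

section
/- Let M be the local covariance map on 𝕊² defined by M(X) = A X Aᵀ + η²λ² X_{11} Q, where A = [[1−ηλ, −β],[ηλ, β]], Q = [[1,−1],[−1,1]], ηλ > 0, and β ∈ [0,1). For any c > 0, if the spectral radius satisfies ρ(cM) ≥ 1, then for every α > 0 there exists no positive semidefinite W ∈ 𝕊² such that (Id − cM)(W) − αQ is positive semidefinite. -/
open Matrix

noncomputable instance : NormedAddCommGroup (Matrix (Fin 2) (Fin 2) ℝ) :=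
  inferInstanceAs (NormedAddCommGroup (Fin 2 → Fin 2 → ℝ))

noncomputable instance : NormedSpace ℝ (Matrix (Fin 2) (Fin 2) ℝ) :=
  inferInstanceAs (NormedSpace ℝ (Fin 2 → Fin 2 → ℝ))

/-- The space `𝕊²` of 2×2 real symmetric matrices, as a submodule of the 2×2 matrices. -/
def Sym2Mat : Submodule ℝ (Matrix (Fin 2) (Fin 2) ℝ) where
  carrier := {X | X.IsSymm}
  add_mem' := fun hA hB => hA.add hB
  zero_mem' := Matrix.isSymm_zero
  smul_mem' := fun c _ hX => hX.smul c

/-- The matrix `A = [[1−ηλ, −β],[ηλ, β]]`. -/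
def Amat (η β l : ℝ) : Matrix (Fin 2) (Fin 2) ℝ := !![1 - η * l, -β; η * l, β]

/-- The matrix `Q = [[1,−1],[−1,1]]`. -/
def Qmat : Matrix (Fin 2) (Fin 2) ℝ := !![1, -1; -1, 1]

/-!
The map `N = c • M` is positive: it maps the Loewner cone of `𝕊²` into itself. Given a feasible
`W`, the matrix `V = W + N W` satisfies
`V - N V = (W - N W) + N (W - N W) ⪰ α (Q + N Q) ⪰ α (Q + c A Q Aᵀ)`, and `Q + c A Q Aᵀ` is
positive definite: its determinant is `c`, because `(1, -1)` and `A (1, -1)` are linearly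
independent. Hence `V - N V ⪰ ε I ⪰ (ε / tr V) V`, i.e. `N V ⪯ r V` with `r < 1`. Since `V` is
an order unit and the Loewner cone is normal (`-Y ⪯ X ⪯ Y` forces `‖X‖ ≤ tr Y`), this gives
`‖Nⁿ‖ ≤ C rⁿ`, so `ρ ≤ r < 1`.
-/

open Filter Topology
open scoped MatrixOrder

local notation "Mat₂" => Matrix (Fin 2) (Fin 2) ℝ

theorem ContinuousLinearMap.pow_apply_le_pow_smul {E : Type*} [AddCommGroup E] [Module ℝ E]
    [TopologicalSpace E] [PartialOrder E] [PosSMulMono ℝ E] {T : E →L[ℝ] E} (hT : Monotone T) {V : E}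
    {r : ℝ} (hr : 0 ≤ r) (hTV : T V ≤ r • V) (n : ℕ) : (T ^ n) V ≤ r ^ n • V := by
  induction n with
  | zero => simp
  | succ n ih =>
    calc (T ^ (n + 1)) V = T ((T ^ n) V) := by rw [pow_succ']; rfl
      _ ≤ T (r ^ n • V) := hT ih
      _ = r ^ n • T V := map_smul T _ V
      _ ≤ r ^ n • r • V := smul_le_smul_of_nonneg_left hTV (pow_nonneg hr n)
      _ = r ^ (n + 1) • V := by rw [smul_smul, pow_succ]

section OrderedNormedSpace

variable {E : Type*} [NormedAddCommGroup E] [NormedSpace ℝ E] [PartialOrder E]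
  [IsOrderedAddMonoid E] [PosSMulMono ℝ E]

/-- `hunit` says that `V` is an order unit and `hφ` that the cone is normal. -/
theorem ContinuousLinearMap.norm_pow_le_of_apply_le_smul {T : E →L[ℝ] E} (hT : Monotone T)
    {V : E} (hV : 0 ≤ V) {r : ℝ} (hr : 0 ≤ r) (hTV : T V ≤ r • V) {C : ℝ} (hC : 0 ≤ C)
    (hunit : ∀ X : E, -((C * ‖X‖) • V) ≤ X ∧ X ≤ (C * ‖X‖) • V)
    (φ : E →ₗ[ℝ] ℝ) (hφ : ∀ X Y : E, -Y ≤ X → X ≤ Y → ‖X‖ ≤ φ Y) (n : ℕ) :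
    ‖T ^ n‖ ≤ C * φ V * r ^ n := by
  have hTn : Monotone (T ^ n) := by
    rw [← coe_coe, toLinearMap_pow, Module.End.coe_pow]
    exact hT.iterate n
  have hφV : 0 ≤ φ V := by simpa using hφ 0 V (by simpa using hV) hV
  refine opNorm_le_bound _ (by positivity) fun X ↦ ?_
  set t := C * ‖X‖
  have ht : 0 ≤ t := by positivity
  have hup : t • (T ^ n) V ≤ (t * r ^ n) • V :=
    (smul_le_smul_of_nonneg_left (pow_apply_le_pow_smul hT hr hTV n) ht).trans_eq (smul_smul _ _ _)
  have hlo : -((t * r ^ n) • V) ≤ (T ^ n) X :=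
    calc -((t * r ^ n) • V) ≤ -(t • (T ^ n) V) := neg_le_neg hup
      _ = (T ^ n) (-(t • V)) := by rw [map_neg, map_smul]
      _ ≤ (T ^ n) X := hTn (hunit X).1
  have hhi : (T ^ n) X ≤ (t * r ^ n) • V :=
    calc (T ^ n) X ≤ (T ^ n) (t • V) := hTn (hunit X).2
      _ = t • (T ^ n) V := map_smul _ _ _
      _ ≤ (t * r ^ n) • V := hup
  calc ‖(T ^ n) X‖ ≤ φ ((t * r ^ n) • V) := hφ _ _ hlo hhi
    _ = C * φ V * r ^ n * ‖X‖ := by rw [map_smul, smul_eq_mul]; ring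

end OrderedNormedSpace

theorem le_of_tendsto_rpow_inv_of_le_mul_pow {a : ℕ → ℝ} {C r ρ : ℝ} (ha : ∀ n, 0 ≤ a n)
    (hr : 0 ≤ r) (hle : ∀ n, a n ≤ C * r ^ n)
    (hρ : Tendsto (fun n : ℕ ↦ a n ^ (n : ℝ)⁻¹) atTop (𝓝 ρ)) : ρ ≤ r := by
  set C' := max C 1
  have hC' : 0 < C' := lt_max_of_lt_right one_pos
  have hlim : Tendsto (fun n : ℕ ↦ C' ^ (n : ℝ)⁻¹ * r) atTop (𝓝 r) := by
    have := ((Real.continuousAt_const_rpow hC'.ne').tendsto.comp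
      tendsto_inv_atTop_nhds_zero_nat).mul_const r
    simpa using this
  refine le_of_tendsto_of_tendsto hρ hlim (eventually_atTop.2 ⟨1, fun n hn ↦ ?_⟩)
  have hn : (n : ℝ) ≠ 0 := by positivity
  calc a n ^ (n : ℝ)⁻¹ ≤ (C' * r ^ n) ^ (n : ℝ)⁻¹ := by
        gcongr
        · exact ha n
        · exact (hle n).trans (mul_le_mul_of_nonneg_right (le_max_left _ _) (by positivity))
    _ = C' ^ (n : ℝ)⁻¹ * r := by
        rw [Real.mul_rpow hC'.le (by positivity), ← Real.rpow_natCast, ← Real.rpow_mul hr,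
          mul_inv_cancel₀ hn, Real.rpow_one]

theorem le_one_sub_div_smul {E : Type*} [AddCommGroup E] [PartialOrder E] [IsOrderedAddMonoid E]
    [Module ℝ E] [PosSMulMono ℝ E] {x y u : E} {δ τ : ℝ} (hδ : 0 ≤ δ) (hτ : 0 < τ)
    (hxy : δ • u ≤ x - y) (hx : x ≤ τ • u) : y ≤ (1 - δ / τ) • x := by
  have h : (δ / τ) • x ≤ δ • u := by
    calc (δ / τ) • x ≤ (δ / τ) • τ • u := smul_le_smul_of_nonneg_left hx (by positivity)
      _ = δ • u := by rw [smul_smul, div_mul_cancel₀ _ hτ.ne']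
  rw [sub_smul, one_smul]
  exact (le_sub_comm.1 hxy).trans (sub_le_sub_left h x)

theorem le_sub_map_add_map_of_le_sub_map {E F : Type*} [AddCommGroup E] [PartialOrder E]
    [IsOrderedAddMonoid E] [FunLike F E E] [AddMonoidHomClass F E E] {T : F} (hT : Monotone T)
    {g w : E} (h : g ≤ w - T w) : g + T g ≤ (w + T w) - T (w + T w) := by
  have : (w + T w) - T (w + T w) = (w - T w) + T (w - T w) := by
    rw [map_add, map_sub]; abel
  rw [this]
  exact add_le_add h (hT h)

namespace Matrix

theorem PosSemidef.fin_two_quadForm_nonneg {A : Mat₂} (hA : A.PosSemidef)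
    (x y : ℝ) : 0 ≤ A 0 0 * x ^ 2 + (A 0 1 + A 1 0) * x * y + A 1 1 * y ^ 2 := by
  have h := hA.dotProduct_mulVec_nonneg ![x, y]
  simp only [dotProduct, mulVec, Fin.sum_univ_two, star_trivial, cons_val_zero, cons_val_one,
    Pi.star_apply] at h
  linarith

theorem posSemidef_fin_two_iff {A : Mat₂} (hA : A.IsSymm) :
    A.PosSemidef ↔ 0 ≤ A 0 0 ∧ 0 ≤ A 1 1 ∧ A 0 1 ^ 2 ≤ A 0 0 * A 1 1 := by
  have h10 : A 1 0 = A 0 1 := hA.apply 0 1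
  refine ⟨fun h ↦ ⟨h.diag_nonneg, h.diag_nonneg, ?_⟩, fun ⟨h0, h1, hdet⟩ ↦ ?_⟩
  · have := h.det_nonneg
    rw [det_fin_two, h10] at this
    linarith
  · refine .of_dotProduct_mulVec_nonneg (isHermitian_iff_isSymm.2 hA) fun v ↦ ?_
    simp only [dotProduct, mulVec, Fin.sum_univ_two, star_trivial, h10]
    rcases h0.eq_or_lt with ha | ha
    · have hb : A 0 1 = 0 := by nlinarith
      rw [← ha, hb]; nlinarith [sq_nonneg (v 1)]
    · refine nonneg_of_mul_nonneg_right ?_ ha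
      nlinarith [sq_nonneg (A 0 0 * v 0 + A 0 1 * v 1), mul_nonneg (sub_nonneg.2 hdet) (sq_nonneg (v 1))]

theorem abs_apply_le_norm (X : Mat₂) (i j : Fin 2) : |X i j| ≤ ‖X‖ :=
  (norm_le_pi_norm (X i) j).trans (norm_le_pi_norm X i)

theorem norm_le_of_forall_abs_apply_le {X : Mat₂} {s : ℝ} (hs : 0 ≤ s)
    (h : ∀ i j, |X i j| ≤ s) : ‖X‖ ≤ s :=
  (pi_norm_le_iff_of_nonneg hs).2 fun i ↦ (pi_norm_le_iff_of_nonneg hs).2 fun j ↦ h i j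

theorem norm_le_trace_of_neg_le_of_le {X Y : Mat₂} (hX : X.IsSymm)
    (h₁ : -Y ≤ X) (h₂ : X ≤ Y) : ‖X‖ ≤ Y.trace := by
  rw [le_iff, sub_neg_eq_add] at h₁
  rw [le_iff] at h₂
  have h10 : X 1 0 = X 0 1 := hX.apply 0 1
  have q₁ := h₁.fin_two_quadForm_nonneg
  have q₂ := h₂.fin_two_quadForm_nonneg
  simp only [add_apply, sub_apply, h10] at q₁ q₂
  have := q₁ 1 0; have := q₂ 1 0; have := q₁ 0 1; have := q₂ 0 1
  have := q₁ 1 1; have := q₂ 1 1; have := q₁ 1 (-1); have := q₂ 1 (-1)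
  rw [trace_fin_two]
  refine norm_le_of_forall_abs_apply_le (by linarith) fun i j ↦ abs_le.2 ?_
  fin_cases i <;> fin_cases j <;> simp only [Fin.zero_eta, Fin.mk_one, h10] <;>
    constructor <;> nlinarith

theorem le_two_mul_norm_smul_one {X : Mat₂} (hX : X.IsSymm) :
    X ≤ (2 * ‖X‖) • 1 := by
  have hS : ((2 * ‖X‖) • 1 - X).IsSymm := (isSymm_one.smul _).sub hX
  rw [le_iff, posSemidef_fin_two_iff hS]
  have h00 := abs_le.1 (abs_apply_le_norm X 0 0)
  have h11 := abs_le.1 (abs_apply_le_norm X 1 1)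
  have h01 := abs_le.1 (abs_apply_le_norm X 0 1)
  simp only [sub_apply, smul_apply, one_apply_eq, one_apply_ne zero_ne_one, smul_eq_mul]
  refine ⟨by linarith, by linarith, by nlinarith⟩

theorem PosSemidef.le_trace_smul_one {A : Mat₂} (hA : A.PosSemidef) :
    A ≤ A.trace • 1 := by
  have hsymm : A.IsSymm := isHermitian_iff_isSymm.1 hA.isHermitian
  obtain ⟨h0, h1, hdet⟩ := (posSemidef_fin_two_iff hsymm).1 hA
  rw [le_iff, posSemidef_fin_two_iff ((isSymm_one.smul _).sub hsymm), trace_fin_two]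
  simp only [sub_apply, smul_apply, one_apply_eq, one_apply_ne zero_ne_one, smul_eq_mul]
  refine ⟨by linarith, by linarith, by nlinarith⟩

/-- The smaller eigenvalue of a positive semidefinite `2 × 2` matrix is at least `det / trace`. -/
theorem PosSemidef.det_div_trace_smul_one_le {A : Mat₂} (hA : A.PosSemidef)
    (htr : 0 < A.trace) : (A.det / A.trace) • 1 ≤ A := by
  have hsymm : A.IsSymm := isHermitian_iff_isSymm.1 hA.isHermitian
  have h10 : A 1 0 = A 0 1 := hsymm.apply 0 1
  obtain ⟨h0, h1, hdet⟩ := (posSemidef_fin_two_iff hsymm).1 hA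
  rw [le_iff, posSemidef_fin_two_iff (hsymm.sub (isSymm_one.smul _))]
  rw [trace_fin_two] at htr ⊢
  rw [det_fin_two, h10]
  simp only [sub_apply, smul_apply, one_apply_eq, one_apply_ne zero_ne_one, smul_eq_mul,
    mul_one, mul_zero, sub_zero]
  set t := (A 0 0 * A 1 1 - A 0 1 * A 0 1) / (A 0 0 + A 1 1)
  have ht : t * (A 0 0 + A 1 1) = A 0 0 * A 1 1 - A 0 1 * A 0 1 := div_mul_cancel₀ _ htr.ne'
  refine ⟨by nlinarith, by nlinarith, by nlinarith [sq_nonneg t]⟩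

theorem le_smul_of_smul_one_le {X V : Mat₂} (hX : X.IsSymm) {ε : ℝ}
    (hε : 0 < ε) (hV : ε • 1 ≤ V) : X ≤ (2 / ε * ‖X‖) • V :=
  calc X ≤ (2 * ‖X‖) • 1 := le_two_mul_norm_smul_one hX
    _ = (2 / ε * ‖X‖) • ε • (1 : Mat₂) := by
        rw [smul_smul]; field_simp
    _ ≤ (2 / ε * ‖X‖) • V := smul_le_smul_of_nonneg_left hV (by positivity)

end Matrix

theorem Qmat_isSymm : Qmat.IsSymm := by
  ext i j; fin_cases i <;> fin_cases j <;> rfl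

def Qsym : Sym2Mat := ⟨Qmat, Qmat_isSymm⟩

instance : PosSMulMono ℝ Sym2Mat :=
  ⟨fun a ha x y h ↦ show a • (x : Mat₂) ≤ a • (y : Mat₂)
    from smul_le_smul_of_nonneg_left h ha⟩

theorem Qmat_posSemidef : Qmat.PosSemidef := by
  rw [Matrix.posSemidef_fin_two_iff Qmat_isSymm]
  simp [Qmat]

theorem lt_one_of_smul_one_le_sub_apply {T : Sym2Mat →L[ℝ] Sym2Mat} (hT : Monotone T)
    {V : Sym2Mat} (hV : 0 ≤ V) {ε : ℝ} (hε : 0 < ε)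
    (hVT : ε • (1 : Mat₂) ≤ ((V - T V : Sym2Mat) : Mat₂))
    {ρ : ℝ} (hρ : Tendsto (fun n : ℕ ↦ ‖T ^ n‖ ^ (n : ℝ)⁻¹) atTop (𝓝 ρ)) : ρ < 1 := by
  set τ := (V : Mat₂).trace
  have hTV : 0 ≤ T V := by simpa using hT hV
  have hεV : ε • 1 ≤ (V : Mat₂) := hVT.trans (sub_le_self _ hTV)
  have hτ : 2 * ε ≤ τ := by
    have := (Matrix.le_iff.1 hεV).trace_nonneg
    simp only [Matrix.trace_sub, Matrix.trace_smul, Matrix.trace_one, Fintype.card_fin,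
      Nat.cast_ofNat, smul_eq_mul] at this
    linarith
  have hVτ : (V : Mat₂) ≤ τ • 1 :=
    (Matrix.nonneg_iff_posSemidef.1 hV).le_trace_smul_one
  have hετ : ε / τ ≤ 1 := (div_le_one (by linarith)).2 (by linarith)
  have hr : 0 ≤ 1 - ε / τ := sub_nonneg.2 hετ
  have hcontr : T V ≤ (1 - ε / τ) • V := le_one_sub_div_smul hε.le (by linarith) hVT hVτ
  have hunit (X : Sym2Mat) : -((2 / ε * ‖X‖) • V) ≤ X ∧ X ≤ (2 / ε * ‖X‖) • V := by
    refine ⟨neg_le.1 ?_, Matrix.le_smul_of_smul_one_le X.2 hε hεV⟩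
    have h := Matrix.le_smul_of_smul_one_le (X := -(X : Mat₂)) X.2.neg hε hεV
    rw [norm_neg] at h
    exact h
  have hnormal (X Y : Sym2Mat) (h₁ : -Y ≤ X) (h₂ : X ≤ Y) :
      ‖X‖ ≤ (Matrix.traceLinearMap (Fin 2) ℝ ℝ ∘ₗ Sym2Mat.subtype) Y :=
    Matrix.norm_le_trace_of_neg_le_of_le X.2 h₁ h₂
  have hbound := T.norm_pow_le_of_apply_le_smul hT hV hr hcontr (by positivity) hunit _ hnormal
  refine (le_of_tendsto_rpow_inv_of_le_mul_pow (fun n ↦ norm_nonneg _) hr hbound hρ).trans_lt ?_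
  linarith [div_pos hε (by linarith : 0 < τ)]

theorem det_Qmat_add_smul_conj (η β l c : ℝ) :
    (Qmat + c • (Amat η β l * Qmat * (Amat η β l)ᵀ)).det = c := by
  rw [Matrix.det_fin_two]
  simp only [Amat, Qmat, Matrix.add_apply, Matrix.smul_apply, Matrix.mul_apply, Fin.sum_univ_two,
    Matrix.transpose_apply, Matrix.of_apply, Matrix.cons_val', Matrix.cons_val_zero,
    Matrix.cons_val_one, Matrix.empty_val', Matrix.cons_val_fin_one, smul_eq_mul]
  ring

def IsLocalCovMap (η β l : ℝ) (M : Sym2Mat →L[ℝ] Sym2Mat) : Prop :=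
  ∀ X : Sym2Mat, (M X : Mat₂)
    = Amat η β l * X * (Amat η β l)ᵀ + (η ^ 2 * l ^ 2 * (X : Mat₂) 0 0) • Qmat

namespace IsLocalCovMap

variable {η β l : ℝ} {M : Sym2Mat →L[ℝ] Sym2Mat}

theorem monotone_smul (hM : IsLocalCovMap η β l M) {c : ℝ} (hc : 0 ≤ c) : Monotone (c • M) := by
  refine (monotone_iff_map_nonneg _).2 fun X hX ↦ ?_
  have hX' : (X : Mat₂).PosSemidef := Matrix.nonneg_iff_posSemidef.1 hX
  have hMX : (M X : Mat₂).PosSemidef := by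
    rw [hM X]
    refine .add ?_ (Qmat_posSemidef.smul (by have := hX'.diag_nonneg (i := 0); positivity))
    simpa [Matrix.conjTranspose_eq_transpose_of_trivial] using
      hX'.mul_mul_conjTranspose_same (Amat η β l)
  exact Matrix.nonneg_iff_posSemidef.2 (hMX.smul hc)

theorem exists_smul_one_le (hM : IsLocalCovMap η β l M) {c : ℝ} (hc : 0 < c) :
    ∃ δ : ℝ, 0 < δ ∧ δ • (1 : Mat₂) ≤ ((Qsym + (c • M) Qsym : Sym2Mat) : Mat₂) := by
  set G := Qmat + c • (Amat η β l * Qmat * (Amat η β l)ᵀ)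
  have hAQA : (Amat η β l * Qmat * (Amat η β l)ᵀ).PosSemidef := by
    simpa [Matrix.conjTranspose_eq_transpose_of_trivial] using
      Qmat_posSemidef.mul_mul_conjTranspose_same (Amat η β l)
  have hG : G.PosSemidef := Qmat_posSemidef.add (hAQA.smul hc.le)
  have htr : 0 < G.trace := by
    have : Qmat.trace = 2 := by simp [Qmat, Matrix.trace_fin_two]; norm_num
    have := (hAQA.smul hc.le).trace_nonneg
    simp only [G, Matrix.trace_add] at *
    linarith
  refine ⟨G.det / G.trace, by rw [det_Qmat_add_smul_conj]; positivity,
    (hG.det_div_trace_smul_one_le htr).trans ?_⟩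
  have hdiff : ((Qsym + (c • M) Qsym : Sym2Mat) : Mat₂) - G
      = (c * (η ^ 2 * l ^ 2)) • Qmat := by
    have hQ : (Qsym : Mat₂) = Qmat := rfl
    have hQ00 : Qmat 0 0 = 1 := rfl
    simp only [Submodule.coe_add, _root_.smul_apply, Submodule.coe_smul, hM Qsym,
      hQ, hQ00, G]
    module
  rw [Matrix.le_iff, hdiff]
  exact Qmat_posSemidef.smul (by positivity)

end IsLocalCovMap

theorem local_cov_map_infeasibility_general (η l β : ℝ)
    (M : Sym2Mat →L[ℝ] Sym2Mat)
    (hM : ∀ X : Sym2Mat, ((M X : Matrix (Fin 2) (Fin 2) ℝ))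
        = Amat η β l * (X : Matrix (Fin 2) (Fin 2) ℝ) * (Amat η β l)ᵀ
          + (η ^ 2 * l ^ 2 * (X : Matrix (Fin 2) (Fin 2) ℝ) 0 0) • Qmat)
    (c : ℝ) (hc : 0 < c) (ρ : ℝ)
    (hρ : Filter.Tendsto (fun n : ℕ => ‖(c • M) ^ n‖ ^ ((n : ℝ)⁻¹)) Filter.atTop (nhds ρ))
    (hρ1 : 1 ≤ ρ) (α : ℝ) (hα : 0 < α) :
    ¬ ∃ W : Sym2Mat, ((W : Matrix (Fin 2) (Fin 2) ℝ)).PosSemidef ∧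
        ((((1 - c • M) W : Sym2Mat) : Matrix (Fin 2) (Fin 2) ℝ) - α • Qmat).PosSemidef := by
  rintro ⟨W, hW, hWQ⟩
  have hM' : IsLocalCovMap η β l M := hM
  have hT : Monotone (c • M) := hM'.monotone_smul hc.le
  obtain ⟨δ, hδ, hδQ⟩ := hM'.exists_smul_one_le hc
  have hW' : 0 ≤ W := Matrix.nonneg_iff_posSemidef.2 hW
  have hαQ : α • Qsym ≤ W - (c • M) W := Matrix.le_iff.2 hWQ
  set V := W + (c • M) W
  have hV : 0 ≤ V := add_nonneg hW' (by simpa using hT hW')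
  have hVT : (α * δ) • (1 : Mat₂) ≤ ((V - (c • M) V : Sym2Mat) : Mat₂) :=
    calc (α * δ) • (1 : Mat₂) ≤ α • ((Qsym + (c • M) Qsym : Sym2Mat) : Mat₂) := by
          rw [mul_smul]; exact smul_le_smul_of_nonneg_left hδQ hα.le
      _ = ((α • Qsym + (c • M) (α • Qsym) : Sym2Mat) : Mat₂) := by
          rw [map_smul, ← smul_add]; rfl
      _ ≤ _ := le_sub_map_add_map_of_le_sub_map hT hαQ
  exact (lt_one_of_smul_one_le_sub_apply hT hV (mul_pos hα hδ) hVT hρ).not_ge hρ1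

/-- **Scaled infeasibility for the local covariance map.**  Let `M` be the local covariance
map on `𝕊²`, `M(X) = A X Aᵀ + η²λ² X₁₁ Q`.  For any `c > 0`, if the spectral radius `ρ` of
`cM` (the limit of `‖(cM)ⁿ‖^{1/n}`) satisfies `ρ ≥ 1`, then for every `α > 0` there is no
positive semidefinite `W ∈ 𝕊²` with `(Id − cM)(W) − αQ` positive semidefinite. -/
theorem local_cov_map_infeasibility (η l β : ℝ) (hη : 0 < η) (hl : 0 < l)
    (hβ : β ∈ Set.Ico (0 : ℝ) 1)
    (M : Sym2Mat →L[ℝ] Sym2Mat)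
    (hM : ∀ X : Sym2Mat, ((M X : Matrix (Fin 2) (Fin 2) ℝ))
        = Amat η β l * (X : Matrix (Fin 2) (Fin 2) ℝ) * (Amat η β l)ᵀ
          + (η ^ 2 * l ^ 2 * (X : Matrix (Fin 2) (Fin 2) ℝ) 0 0) • Qmat)
    (c : ℝ) (hc : 0 < c) (ρ : ℝ)
    (hρ : Filter.Tendsto (fun n : ℕ => ‖(c • M) ^ n‖ ^ ((n : ℝ)⁻¹)) Filter.atTop (nhds ρ))
    (hρ1 : 1 ≤ ρ) (α : ℝ) (hα : 0 < α) :
    ¬ ∃ W : Sym2Mat, ((W : Matrix (Fin 2) (Fin 2) ℝ)).PosSemidef ∧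
        ((((1 - c • M) W : Sym2Mat) : Matrix (Fin 2) (Fin 2) ℝ) - α • Qmat).PosSemidef :=
  local_cov_map_infeasibility_general η l β M hM c hc ρ hρ hρ1 α hα
end
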